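/- Let β ≥ β' ≥ 0, r ≥ 1, and let x₀ be a positive integer. Then the time of the second tie for a process started from the tied state (x₀, x₀) satisfies T₂(β, r, (x₀,x₀)) ⪰ T₂(β', r, (x₀,x₀)). In particular, the probability of ever tying again satisfies P[T₂(β, r, (x₀,x₀)) < ∞] ≤ 2/(r+1). -/

import Mathlib

open MeasureTheory Filter

noncomputable section

/-- Transition probability of the nonlinear Pólya urn with feedback strength `β` and
fitness ratio `r`: from `(x₁,x₂)` move to `(x₁+1,x₂)` with probability
`r·x₁^β/(r·x₁^β + x₂^β)`, to `(x₁,x₂+1)` with probability `x₂^β/(r·x₁^β + x₂^β)`,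
and nowhere else. -/
def urnStep (β r : ℝ) (x y : ℕ × ℕ) : ℝ :=
  if y = (x.1 + 1, x.2) then r * (x.1 : ℝ) ^ β / (r * (x.1 : ℝ) ^ β + (x.2 : ℝ) ^ β)
  else if y = (x.1, x.2 + 1) then (x.2 : ℝ) ^ β / (r * (x.1 : ℝ) ^ β + (x.2 : ℝ) ^ β)
  else 0

/-- `μ` is the law (on trajectories `ℕ → ℕ × ℕ`) of a `(β,r,x₀)`-urn process:
a probability measure under which each finite initial trajectory starting at `x₀`
has probability equal to the product of the one-step urn transition probabilities. -/
def IsUrnProcess (μ : Measure (ℕ → ℕ × ℕ)) (β r : ℝ) (x₀ : ℕ × ℕ) : Prop :=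
  IsProbabilityMeasure μ ∧
  ∀ (n : ℕ) (path : ℕ → ℕ × ℕ), path 0 = x₀ →
    (μ {ω | ∀ t ≤ n, ω t = path t}).toReal
      = ∏ t ∈ Finset.range n, urnStep β r (path t) (path (t + 1))

/-- `N_t`: the number of ties up to (and including) time `t`. -/
def numTiesUpTo (ω : ℕ → ℕ × ℕ) (t : ℕ) : ℕ :=
  ((Finset.range (t + 1)).filter (fun j => (ω j).1 = (ω j).2)).card

/-- The intensity `N`: the total number of ties (possibly `∞`). -/
def intensity (ω : ℕ → ℕ × ℕ) : ℕ∞ :=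
  {t : ℕ | (ω t).1 = (ω t).2}.encard

/-- `T_n` (for `n ≥ 1`): the time of the `n`-th tie, i.e. the (unique, if it exists) time `s`
at which a tie occurs and the number of ties up to `s` equals `n`; `⊤` if there is no such time. -/
def nthTieTime (n : ℕ) (ω : ℕ → ℕ × ℕ) : ℕ∞ :=
  sInf {t : ℕ∞ | ∃ s : ℕ, t = (s : ℕ∞) ∧ (ω s).1 = (ω s).2 ∧ numTiesUpTo ω s = n}

/-- The event `{T ≥ t}` where `T` is the duration (time of the last tie, with the convention
`T = -1` if there is no tie): for `t : ℕ` this event is exactly `{∃ s ≥ t, a tie occurs at s}`. -/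
def durationTail (t : ℕ) : Set (ℕ → ℕ × ℕ) :=
  {ω | ∃ s, t ≤ s ∧ (ω s).1 = (ω s).2}


/-!
From the tie `(x₀, x₀)` the urn first moves to `(x₀ + 1, x₀)` or `(x₀, x₀ + 1)` with probabilities
`r / (r + 1)` and `1 / (r + 1)`, whatever `β` is. Swapping the two urns together with their
weights `r` and `1` turns the second successor into a state where the first urn leads, like the
first one. From a state `(a, b)` with `b ≤ a` the leader grows with probability
`w₁ / (w₁ + w₂ (b / a) ^ β)`, which increases with `β` and with the gap; so, by induction on the
horizon, an urn with a larger exponent started further from the diagonal is less likely to tie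
within any number of steps. These no-tie probabilities are read off the finite-dimensional law by
summing the weights of the trajectories. For `β = 0` the gap is a biased random walk, which from
height `1` never reaches `0` with probability `1 - 1 / r`; hence
`P[T₂ < ∞] ≤ 1 - r / (r + 1) * (1 - 1 / r) = 2 / (r + 1)`.
-/

namespace Urn

open Stream'

variable {β β' r w₁ w₂ : ℝ}

/-- Probability that the next ball goes to the first urn when the urns have weights `w₁` and `w₂`;
`urnStep β r` has weights `(r, 1)`, and swapping the urns swaps the weights. -/
def upProb (β w₁ w₂ : ℝ) (s : ℕ × ℕ) : ℝ :=
  w₁ * (s.1 : ℝ) ^ β / (w₁ * (s.1 : ℝ) ^ β + w₂ * (s.2 : ℝ) ^ β)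

lemma upProb_nonneg (hw₁ : 0 ≤ w₁) (hw₂ : 0 ≤ w₂) (s : ℕ × ℕ) : 0 ≤ upProb β w₁ w₂ s := by
  unfold upProb; positivity

lemma upProb_le_one (hw₁ : 0 ≤ w₁) (hw₂ : 0 ≤ w₂) (s : ℕ × ℕ) : upProb β w₁ w₂ s ≤ 1 :=
  div_le_one_of_le₀ (le_add_of_nonneg_right (by positivity)) (by positivity)

lemma upProb_add_upProb_swap (hw₁ : 0 < w₁) (hw₂ : 0 < w₂) {s : ℕ × ℕ} (h₁ : 0 < s.1)
    (h₂ : 0 < s.2) : upProb β w₁ w₂ s + upProb β w₂ w₁ s.swap = 1 := by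
  have : 0 < w₁ * (s.1 : ℝ) ^ β + w₂ * (s.2 : ℝ) ^ β := by positivity
  rw [upProb, upProb, Prod.fst_swap, Prod.snd_swap, add_comm (w₂ * _), ← add_div,
    div_self this.ne']

lemma upProb_eq_ratio (a b : ℕ) (ha : 0 < a) :
    upProb β w₁ w₂ (a, b) = w₁ / (w₁ + w₂ * ((b : ℝ) / a) ^ β) := by
  have : (0 : ℝ) < (a : ℝ) ^ β := by positivity
  rw [upProb, Real.div_rpow (by positivity) (by positivity)]
  field_simp

lemma upProb_diag (x : ℕ) (hx : 0 < x) : upProb β w₁ w₂ (x, x) = w₁ / (w₁ + w₂) := by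
  rw [upProb_eq_ratio x x hx, div_self (by positivity), Real.one_rpow, mul_one]

lemma upProb_exponent_zero (s : ℕ × ℕ) : upProb 0 w₁ w₂ s = w₁ / (w₁ + w₂) := by
  simp [upProb]

lemma upProb_mono (hw₁ : 0 < w₁) (hw₂ : 0 ≤ w₂) (hβ' : 0 ≤ β') (hββ' : β' ≤ β)
    {a b a' b' : ℕ} (hb : 0 < b) (hbb' : b ≤ b') (hb'a' : b' ≤ a') (ha'a : a' ≤ a) :
    upProb β' w₁ w₂ (a', b') ≤ upProb β w₁ w₂ (a, b) := by
  rw [upProb_eq_ratio a' b' (by omega), upProb_eq_ratio a b (by omega)]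
  have ha : (0 : ℝ) < a := by norm_cast; omega
  have hb : (0 : ℝ) < b := by norm_cast
  have hratio : (b : ℝ) / a ≤ b' / a' := by
    rw [div_le_div_iff₀ ha (by norm_cast; omega)]
    exact_mod_cast Nat.mul_le_mul hbb' ha'a
  have hle_one : (b : ℝ) / a ≤ 1 := div_le_one_of_le₀ (by norm_cast; omega) (by positivity)
  have : ((b : ℝ) / a) ^ β ≤ ((b' : ℝ) / a') ^ β' :=
    calc ((b : ℝ) / a) ^ β ≤ ((b : ℝ) / a) ^ β' :=
          Real.rpow_le_rpow_of_exponent_ge (by positivity) hle_one hββ'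
      _ ≤ ((b' : ℝ) / a') ^ β' := Real.rpow_le_rpow (by positivity) hratio hβ'
  gcongr

/-- Probability that the urn with weights `(w₁, w₂)` started at `s` has no tie at times
`0, …, m`. -/
def noTieProb (β w₁ w₂ : ℝ) : ℕ → ℕ × ℕ → ℝ
  | 0, s => if s.1 = s.2 then 0 else 1
  | m + 1, s => if s.1 = s.2 then 0 else
      upProb β w₁ w₂ s * noTieProb β w₁ w₂ m (s.1 + 1, s.2) +
        upProb β w₂ w₁ s.swap * noTieProb β w₁ w₂ m (s.1, s.2 + 1)

lemma noTieProb_succ_of_ne {m : ℕ} {s : ℕ × ℕ} (h : s.1 ≠ s.2) :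
    noTieProb β w₁ w₂ (m + 1) s = upProb β w₁ w₂ s * noTieProb β w₁ w₂ m (s.1 + 1, s.2) +
      upProb β w₂ w₁ s.swap * noTieProb β w₁ w₂ m (s.1, s.2 + 1) :=
  if_neg h

lemma noTieProb_nonneg (hw₁ : 0 ≤ w₁) (hw₂ : 0 ≤ w₂) (m : ℕ) (s : ℕ × ℕ) :
    0 ≤ noTieProb β w₁ w₂ m s := by
  induction m generalizing s with
  | zero => unfold noTieProb; split_ifs <;> norm_num
  | succ m ih =>
    unfold noTieProb
    split_ifs
    · exact le_rfl
    · exact add_nonneg (mul_nonneg (upProb_nonneg hw₁ hw₂ s) (ih _))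
        (mul_nonneg (upProb_nonneg hw₂ hw₁ s.swap) (ih _))

lemma noTieProb_swap (m : ℕ) (s : ℕ × ℕ) :
    noTieProb β w₁ w₂ m s = noTieProb β w₂ w₁ m s.swap := by
  induction m generalizing s with
  | zero => simp only [noTieProb, Prod.fst_swap, Prod.snd_swap, eq_comm]
  | succ m ih =>
    simp only [noTieProb, Prod.fst_swap, Prod.snd_swap, Prod.swap_swap, eq_comm (a := s.2), ih]
    rw [add_comm]
    rfl

/-- Allowing a tie in the primed state makes the induction close without boundary cases. -/
lemma noTieProb_mono (hw₁ : 0 < w₁) (hw₂ : 0 < w₂) (hβ' : 0 ≤ β') (hββ' : β' ≤ β) (k : ℕ)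
    {a b a' b' : ℕ} (hb : 0 < b) (hbb' : b ≤ b') (hb'a' : b' ≤ a') (ha'a : a' ≤ a) :
    noTieProb β' w₁ w₂ k (a', b') ≤ noTieProb β w₁ w₂ k (a, b) := by
  induction k generalizing β' a b a' b' with
  | zero =>
    simp only [noTieProb]
    split_ifs <;> first | omega | norm_num
  | succ k ih =>
    rcases hb'a'.eq_or_lt with htie | hlt
    · rw [noTieProb, if_pos htie.symm]
      exact noTieProb_nonneg hw₁.le hw₂.le _ _
    rw [noTieProb_succ_of_ne (show a' ≠ b' by simp; omega),
      noTieProb_succ_of_ne (show a ≠ b by simp; omega)]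
    have hsum := upProb_add_upProb_swap (β := β) hw₁ hw₂ (s := (a, b)) (by simp; omega) hb
    have hsum' := upProb_add_upProb_swap (β := β') hw₁ hw₂ (s := (a', b')) (by simp; omega)
      (by simp; omega)
    set p := upProb β w₁ w₂ (a, b)
    set p' := upProb β' w₁ w₂ (a', b')
    rw [show upProb β w₂ w₁ (a, b).swap = 1 - p by linarith,
      show upProb β' w₂ w₁ (a', b').swap = 1 - p' by linarith]
    have hpp' : p' ≤ p := upProb_mono hw₁ hw₂.le hβ' hββ' hb hbb' hb'a' ha'a
    have hp' : 0 ≤ p' := upProb_nonneg hw₁.le hw₂.le _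
    have hp'1 : p' ≤ 1 := upProb_le_one hw₁.le hw₂.le _
    have hup : noTieProb β' w₁ w₂ k (a' + 1, b') ≤ noTieProb β w₁ w₂ k (a + 1, b) :=
      ih hβ' hββ' hb hbb' (by omega) (by omega)
    have hdown : noTieProb β' w₁ w₂ k (a', b' + 1) ≤ noTieProb β w₁ w₂ k (a, b + 1) :=
      ih hβ' hββ' (by omega) (by omega) (by omega) ha'a
    have hdown_up : noTieProb β w₁ w₂ k (a, b + 1) ≤ noTieProb β w₁ w₂ k (a + 1, b) :=
      ih (hβ'.trans hββ') le_rfl (by omega) (by omega) (by omega) (by omega)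
    calc p' * noTieProb β' w₁ w₂ k (a' + 1, b') + (1 - p') * noTieProb β' w₁ w₂ k (a', b' + 1)
        ≤ p' * noTieProb β w₁ w₂ k (a + 1, b) + (1 - p') * noTieProb β w₁ w₂ k (a, b + 1) := by
          gcongr
      _ ≤ p * noTieProb β w₁ w₂ k (a + 1, b) + (1 - p) * noTieProb β w₁ w₂ k (a, b + 1) := by
          nlinarith

/-- Gambler's ruin: for `β = 0` the gap performs a biased random walk, and
`1 - (w₂ / w₁) ^ d` is its probability of never hitting `0` from height `d`. -/
lemma one_sub_pow_le_noTieProb_zero (hw₁ : 0 < w₁) (hw₂ : 0 < w₂) (k d b : ℕ) :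
    1 - (w₂ / w₁) ^ d ≤ noTieProb 0 w₁ w₂ k (b + d, b) := by
  induction k generalizing d b with
  | zero =>
    have : 0 ≤ (w₂ / w₁) ^ d := by positivity
    rcases d with _ | d <;> simp [noTieProb]
    linarith
  | succ k ih =>
    rcases d with _ | d
    · simpa using noTieProb_nonneg hw₁.le hw₂.le (k + 1) (b, b)
    rw [noTieProb_succ_of_ne (by simp), upProb_exponent_zero, upProb_exponent_zero]
    have hfar : 1 - (w₂ / w₁) ^ (d + 2) ≤ noTieProb 0 w₁ w₂ k (b + (d + 1) + 1, b) :=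
      ih (d + 2) b
    have hnear : 1 - (w₂ / w₁) ^ d ≤ noTieProb 0 w₁ w₂ k (b + (d + 1), b + 1) := by
      simpa only [Nat.add_right_comm b 1 d, add_assoc] using ih d (b + 1)
    calc 1 - (w₂ / w₁) ^ (d + 1)
        = w₁ / (w₁ + w₂) * (1 - (w₂ / w₁) ^ (d + 2)) + w₂ / (w₂ + w₁) * (1 - (w₂ / w₁) ^ d) := by
          rw [pow_succ, pow_add]
          field_simp
          ring
      _ ≤ _ := by gcongr

/-- Probability that the urn started at the tie `(x, x)` has no tie at times `1, …, n + 1`. -/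
def noReturnProb (β r : ℝ) (n x : ℕ) : ℝ :=
  r / (r + 1) * noTieProb β r 1 n (x + 1, x) + 1 / (1 + r) * noTieProb β 1 r n (x + 1, x)

lemma noReturnProb_nonneg (hr : 0 < r) (n x : ℕ) : 0 ≤ noReturnProb β r n x :=
  add_nonneg (mul_nonneg (by positivity) (noTieProb_nonneg hr.le zero_le_one n _))
    (mul_nonneg (by positivity) (noTieProb_nonneg zero_le_one hr.le n _))

lemma noReturnProb_mono (hr : 0 < r) (hβ' : 0 ≤ β') (hββ' : β' ≤ β) {x : ℕ} (hx : 0 < x)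
    (n : ℕ) : noReturnProb β' r n x ≤ noReturnProb β r n x := by
  unfold noReturnProb
  gcongr <;> exact noTieProb_mono (by positivity) (by positivity) hβ' hββ' n hx le_rfl
    (Nat.le_succ x) le_rfl

lemma one_sub_noReturnProb_le (hr : 0 < r) (hβ : 0 ≤ β) {x : ℕ} (hx : 0 < x) (n : ℕ) :
    1 - noReturnProb β r n x ≤ 2 / (r + 1) := by
  have hruin : 1 - 1 / r ≤ noTieProb 0 r 1 n (x + 1, x) := by
    simpa using one_sub_pow_le_noTieProb_zero hr one_pos n 1 x
  have hzero : 0 ≤ noTieProb 0 1 r n (x + 1, x) := noTieProb_nonneg zero_le_one hr.le n _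
  have hlow : (r - 1) / (r + 1) ≤ noReturnProb 0 r n x :=
    calc (r - 1) / (r + 1) = r / (r + 1) * (1 - 1 / r) + 1 / (1 + r) * 0 := by
          field_simp
          ring
      _ ≤ noReturnProb 0 r n x := by unfold noReturnProb; gcongr
  have hmono := noReturnProb_mono hr le_rfl hβ hx n
  calc 1 - noReturnProb β r n x ≤ 1 - (r - 1) / (r + 1) := by linarith
    _ = 2 / (r + 1) := by field_simp; ring

def move (b : Bool) (s : ℕ × ℕ) : ℕ × ℕ := if b then (s.1 + 1, s.2) else (s.1, s.2 + 1)

def walk : ℕ × ℕ → Stream' Bool → ℕ → ℕ × ℕ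
  | s, _, 0 => s
  | s, c, t + 1 => walk (move c.head s) c.tail t

def pathWeight (β r : ℝ) (m : ℕ) (c : Stream' Bool) (s : ℕ × ℕ) : ℝ :=
  ∏ t ∈ Finset.range m, urnStep β r (walk s c t) (walk s c (t + 1))

def toStream {m : ℕ} (c : Fin m → Bool) : Stream' Bool :=
  fun i => if h : i < m then c ⟨i, h⟩ else false

lemma move_injective (s : ℕ × ℕ) : Function.Injective fun b => move b s := by
  intro b b' h
  cases b <;> cases b' <;> simp_all [move]

lemma walk_zero (s : ℕ × ℕ) (c : Stream' Bool) : walk s c 0 = s := rfl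

lemma walk_cons_succ (s : ℕ × ℕ) (b : Bool) (c : Stream' Bool) :
    (fun t => walk s (b :: c) (t + 1)) = walk (move b s) c := rfl

lemma walk_succ (s : ℕ × ℕ) (c : Stream' Bool) (t : ℕ) :
    walk s c (t + 1) = move (c t) (walk s c t) := by
  induction t generalizing s c with
  | zero => rfl
  | succ t ih => exact ih _ _

lemma toStream_cons {m : ℕ} (b : Bool) (c : Fin m → Bool) :
    toStream (Fin.cons b c : Fin (m + 1) → Bool) = b :: toStream c := by
  funext i
  rcases i with _ | i
  · rfl
  · change toStream (Fin.cons b c : Fin (m + 1) → Bool) (i + 1) = toStream c i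
    simp only [toStream, Nat.add_lt_add_iff_right]
    split_ifs with h
    · exact Fin.cons_succ (α := fun _ => Bool) b c ⟨i, h⟩
    · rfl

lemma eq_of_walk_toStream_eq {m : ℕ} (s : ℕ × ℕ) {c c' : Fin m → Bool}
    (h : ∀ t ≤ m, walk s (toStream c) t = walk s (toStream c') t) : c = c' := by
  funext i
  have hstep := h (i + 1) i.isLt
  rw [walk_succ, walk_succ, h i i.isLt.le] at hstep
  simpa [toStream] using move_injective _ hstep

lemma sum_toStream_succ {M : Type*} [AddCommMonoid M] (m : ℕ) (F : Stream' Bool → M) :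
    ∑ c : Fin (m + 1) → Bool, F (toStream c) =
      ∑ b : Bool, ∑ c : Fin m → Bool, F (b :: toStream c) := by
  rw [← (Fin.consEquiv fun _ => Bool).sum_comp, Fintype.sum_prod_type]
  exact Fintype.sum_congr _ _ fun b => Fintype.sum_congr _ _ fun c =>
    congrArg F (toStream_cons b c)

lemma pathWeight_cons (β r : ℝ) (m : ℕ) (b : Bool) (c : Stream' Bool) (s : ℕ × ℕ) :
    pathWeight β r (m + 1) (b :: c) s =
      urnStep β r s (move b s) * pathWeight β r m c (move b s) := by
  rw [pathWeight, Finset.prod_range_succ']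
  exact mul_comm _ _

lemma pathWeight_nonneg (hr : 0 ≤ r) (m : ℕ) (c : Stream' Bool) (s : ℕ × ℕ) :
    0 ≤ pathWeight β r m c s :=
  Finset.prod_nonneg fun _ _ => by unfold urnStep; split_ifs <;> positivity

lemma urnStep_move_true (β r : ℝ) (s : ℕ × ℕ) : urnStep β r s (move true s) = upProb β r 1 s := by
  simp [urnStep, move, upProb]

lemma urnStep_move_false (β r : ℝ) (s : ℕ × ℕ) :
    urnStep β r s (move false s) = upProb β 1 r s.swap := by
  simp [urnStep, move, upProb, add_comm]

lemma sum_urnStep_move_mul (s : ℕ × ℕ) (f : ℕ × ℕ → ℝ) :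
    ∑ b : Bool, urnStep β r s (move b s) * f (move b s) =
      upProb β r 1 s * f (s.1 + 1, s.2) + upProb β 1 r s.swap * f (s.1, s.2 + 1) := by
  rw [Fintype.sum_bool, urnStep_move_true, urnStep_move_false]
  rfl

lemma sum_pathWeight_eq_one (hr : 0 < r) (m : ℕ) {s : ℕ × ℕ} (h₁ : 0 < s.1) (h₂ : 0 < s.2) :
    ∑ c : Fin m → Bool, pathWeight β r m (toStream c) s = 1 := by
  induction m generalizing s with
  | zero => simp [pathWeight]
  | succ m ih =>
    rw [sum_toStream_succ m fun c => pathWeight β r (m + 1) c s]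
    simp only [pathWeight_cons, ← Finset.mul_sum]
    have hstep (b : Bool) : ∑ c : Fin m → Bool, pathWeight β r m (toStream c) (move b s) = 1 :=
      ih (by cases b <;> simp [move, h₁]) (by cases b <;> simp [move, h₂])
    simp only [hstep, mul_one, Fintype.sum_bool, urnStep_move_true, urnStep_move_false]
    exact upProb_add_upProb_swap hr one_pos h₁ h₂

def NoTieUpTo (m : ℕ) (w : ℕ → ℕ × ℕ) : Prop := ∀ t ≤ m, (w t).1 ≠ (w t).2

instance (m : ℕ) : DecidablePred (NoTieUpTo m) := fun _ => by unfold NoTieUpTo; infer_instance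

lemma noTieUpTo_succ {m : ℕ} {w : ℕ → ℕ × ℕ} :
    NoTieUpTo (m + 1) w ↔ (w 0).1 ≠ (w 0).2 ∧ NoTieUpTo m fun t => w (t + 1) := by
  simp only [NoTieUpTo, ← Nat.lt_succ_iff]
  exact Nat.forall_lt_succ_left

lemma sum_pathWeight_noTieUpTo (m : ℕ) (s : ℕ × ℕ) :
    ∑ c : Fin m → Bool,
      (if NoTieUpTo m (walk s (toStream c)) then pathWeight β r m (toStream c) s else 0) =
      noTieProb β r 1 m s := by
  induction m generalizing s with
  | zero => simp [NoTieUpTo, noTieProb, walk, pathWeight, ite_not]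
  | succ m ih =>
    rw [sum_toStream_succ m fun c =>
      if NoTieUpTo (m + 1) (walk s c) then pathWeight β r (m + 1) c s else 0]
    simp only [noTieUpTo_succ, walk_zero, walk_cons_succ, pathWeight_cons]
    by_cases hs : s.1 = s.2
    · simp [hs, noTieProb]
    · simp only [hs, ne_eq, not_false_eq_true, true_and, ← mul_ite_zero, ← Finset.mul_sum, ih]
      rw [sum_urnStep_move_mul s (noTieProb β r 1 m), noTieProb_succ_of_ne hs]

def cylinder (s : ℕ × ℕ) (m : ℕ) (c : Fin m → Bool) : Set (ℕ → ℕ × ℕ) :=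
  {ω | ∀ t ≤ m, ω t = walk s (toStream c) t}

section measure

variable {μ : Measure (ℕ → ℕ × ℕ)} {s : ℕ × ℕ} {m : ℕ}

lemma measurableSet_cylinder (s : ℕ × ℕ) (m : ℕ) (c : Fin m → Bool) :
    MeasurableSet (cylinder s m c) := by
  simp only [cylinder, Set.ofPred_forall]
  exact .iInter fun t => .iInter fun _ => measurable_pi_apply t (measurableSet_singleton _)

lemma pairwise_disjoint_cylinder (s : ℕ × ℕ) (m : ℕ) :
    Pairwise (Function.onFun Disjoint (cylinder s m)) :=
  fun _ _ hne => Set.disjoint_left.2 fun _ h h' =>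
    hne (eq_of_walk_toStream_eq s fun t ht => (h t ht).symm.trans (h' t ht))

lemma measure_cylinder (hμ : IsUrnProcess μ β r s) (c : Fin m → Bool) :
    μ (cylinder s m c) = ENNReal.ofReal (pathWeight β r m (toStream c) s) := by
  have := hμ.1
  rw [← ENNReal.ofReal_toReal (measure_ne_top μ _)]
  exact congrArg _ (hμ.2 m _ rfl)

lemma measure_compl_iUnion_cylinder (hr : 0 < r) (hμ : IsUrnProcess μ β r s) (h₁ : 0 < s.1)
    (h₂ : 0 < s.2) (m : ℕ) : μ (⋃ c, cylinder s m c)ᶜ = 0 := by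
  have := hμ.1
  rw [prob_compl_eq_zero_iff (.iUnion (measurableSet_cylinder s m)),
    measure_iUnion (pairwise_disjoint_cylinder s m) (measurableSet_cylinder s m), tsum_fintype]
  simp_rw [measure_cylinder hμ]
  rw [← ENNReal.ofReal_sum_of_nonneg fun _ _ => pathWeight_nonneg hr.le _ _ _,
    sum_pathWeight_eq_one hr m h₁ h₂, ENNReal.ofReal_one]

lemma setOf_inter_cylinder (P : (ℕ → ℕ × ℕ) → Prop) [DecidablePred P]
    (hP : ∀ ω ω', (∀ t ≤ m, ω t = ω' t) → P ω → P ω') (c : Fin m → Bool) :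
    {ω | P ω} ∩ cylinder s m c = if P (walk s (toStream c)) then cylinder s m c else ∅ := by
  split_ifs with hc
  · exact Set.inter_eq_right.2 fun ω hω => hP _ ω (fun t ht => (hω t ht).symm) hc
  · exact Set.eq_empty_of_forall_notMem fun ω ⟨hω, hcyl⟩ => hc (hP ω _ hcyl hω)

lemma measure_setOf_eq_sum_pathWeight (hr : 0 < r) (hμ : IsUrnProcess μ β r s) (h₁ : 0 < s.1)
    (h₂ : 0 < s.2) (P : (ℕ → ℕ × ℕ) → Prop) [DecidablePred P]
    (hP : ∀ ω ω', (∀ t ≤ m, ω t = ω' t) → P ω → P ω') :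
    μ {ω | P ω} = ENNReal.ofReal (∑ c : Fin m → Bool,
      if P (walk s (toStream c)) then pathWeight β r m (toStream c) s else 0) := by
  have hmeas (c : Fin m → Bool) : MeasurableSet ({ω | P ω} ∩ cylinder s m c) := by
    rw [setOf_inter_cylinder P hP]
    split_ifs
    exacts [measurableSet_cylinder s m c, .empty]
  rw [← measure_inter_conull (measure_compl_iUnion_cylinder hr hμ h₁ h₂ m), Set.inter_iUnion,
    measure_iUnion (fun c c' hne => ((pairwise_disjoint_cylinder s m hne).mono
      Set.inter_subset_right Set.inter_subset_right)) hmeas, tsum_fintype,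
    ENNReal.ofReal_sum_of_nonneg fun c _ => by
      split_ifs; exacts [pathWeight_nonneg hr.le _ _ _, le_rfl]]
  refine Finset.sum_congr rfl fun c _ => ?_
  rw [setOf_inter_cylinder P hP]
  split_ifs
  exacts [measure_cylinder hμ c, by simp]

lemma measure_noTieUpTo_shift {x : ℕ} (hr : 0 < r) (hx : 0 < x)
    (hμ : IsUrnProcess μ β r (x, x)) (n : ℕ) :
    μ {ω | NoTieUpTo n fun t => ω (t + 1)} = ENNReal.ofReal (noReturnProb β r n x) := by
  rw [measure_setOf_eq_sum_pathWeight (m := n + 1) hr hμ hx hx _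
    fun ω ω' h hω t ht => by simpa only [h (t + 1) (by omega)] using hω t ht]
  congr 1
  rw [sum_toStream_succ n fun c =>
    if NoTieUpTo n fun t => walk (x, x) c (t + 1) then pathWeight β r (n + 1) c (x, x) else 0]
  simp only [walk_cons_succ, pathWeight_cons, ← mul_ite_zero, ← Finset.mul_sum,
    sum_pathWeight_noTieUpTo]
  rw [sum_urnStep_move_mul, upProb_diag x hx, Prod.swap_prod_mk, upProb_diag x hx,
    noTieProb_swap n (x, x + 1), noReturnProb]
  rfl

lemma ae_eq_start (hμ : IsUrnProcess μ β r s) : ∀ᵐ ω ∂μ, ω 0 = s := by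
  have := hμ.1
  have hstart := hμ.2 0 (fun _ => s) rfl
  simp only [nonpos_iff_eq_zero, forall_eq, Finset.range_zero, Finset.prod_empty] at hstart
  rw [ae_iff, ← Set.compl_ofPred,
    prob_compl_eq_zero_iff (measurableSet_eq_fun (measurable_pi_apply 0) measurable_const)]
  exact (ENNReal.toReal_eq_one_iff _).1 hstart

lemma measurableSet_noTieUpTo_shift (n : ℕ) :
    MeasurableSet {ω : ℕ → ℕ × ℕ | NoTieUpTo n fun t => ω (t + 1)} := by
  simp only [NoTieUpTo, Set.ofPred_forall]
  exact .iInter fun t => .iInter fun _ =>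
    (Set.to_countable {p : ℕ × ℕ | p.1 ≠ p.2}).measurableSet.preimage (measurable_pi_apply (t + 1))

end measure

section tieTime

variable {ω : ℕ → ℕ × ℕ}

lemma one_le_nthTieTime_two (ω : ℕ → ℕ × ℕ) : 1 ≤ nthTieTime 2 ω := by
  refine le_sInf ?_
  rintro _ ⟨s, rfl, -, hs⟩
  rcases s with _ | s
  · have : numTiesUpTo ω 0 ≤ 1 := (Finset.card_filter_le _ _).trans (Finset.card_range 1).le
    omega
  · exact_mod_cast Nat.succ_pos s

lemma numTiesUpTo_eq_two (h₀ : (ω 0).1 = (ω 0).2) {u : ℕ} (hu : 0 < u)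
    (htie : (ω u).1 = (ω u).2) (hfirst : ∀ s, 0 < s → s < u → (ω s).1 ≠ (ω s).2) :
    numTiesUpTo ω u = 2 := by
  have : (Finset.range (u + 1)).filter (fun j => (ω j).1 = (ω j).2) = {0, u} := by
    ext j
    simp only [Finset.mem_filter, Finset.mem_range, Finset.mem_insert, Finset.mem_singleton]
    constructor
    · rintro ⟨hj, hjtie⟩
      by_contra! hne
      exact hfirst j (by omega) (by omega) hjtie
    · rintro (rfl | rfl)
      exacts [⟨by omega, h₀⟩, ⟨by omega, htie⟩]
  rw [numTiesUpTo, this, Finset.card_pair hu.ne]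

lemma le_nthTieTime_two_iff (h₀ : (ω 0).1 = (ω 0).2) (n : ℕ) :
    ((n + 2 : ℕ) : ℕ∞) ≤ nthTieTime 2 ω ↔ NoTieUpTo n fun t => ω (t + 1) := by
  classical
  constructor
  · intro hT t ht htie
    have hex : ∃ u, 0 < u ∧ (ω u).1 = (ω u).2 := ⟨t + 1, t.succ_pos, htie⟩
    obtain ⟨hupos, hutie⟩ := Nat.find_spec hex
    have hfirst : ∀ s, 0 < s → s < Nat.find hex → (ω s).1 ≠ (ω s).2 :=
      fun s hs hsu hstie => Nat.find_min hex hsu ⟨hs, hstie⟩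
    have hle : nthTieTime 2 ω ≤ Nat.find hex :=
      sInf_le ⟨_, rfl, hutie, numTiesUpTo_eq_two h₀ hupos hutie hfirst⟩
    have : n + 2 ≤ Nat.find hex := by exact_mod_cast hT.trans hle
    have : Nat.find hex ≤ t + 1 := Nat.find_min' hex ⟨t.succ_pos, htie⟩
    omega
  · intro hnt
    refine le_sInf ?_
    rintro _ ⟨s, rfl, hstie, hs⟩
    by_contra! hlt
    have hlt : s < n + 2 := by exact_mod_cast hlt
    rcases s with _ | s
    · rw [numTiesUpTo, Finset.range_one, Finset.filter_singleton, if_pos hstie] at hs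
      simp at hs
    · exact hnt s (by omega) hstie

lemma setOf_nthTieTime_two_lt_top :
    {ω | nthTieTime 2 ω < ⊤} = ⋃ n : ℕ, {ω | ((n + 2 : ℕ) : ℕ∞) ≤ nthTieTime 2 ω}ᶜ := by
  ext ω
  simp only [Set.mem_ofPred_eq, Set.mem_iUnion, Set.mem_compl_iff, not_le]
  constructor
  · intro h
    obtain ⟨k, hk⟩ := ENat.ne_top_iff_exists.1 h.ne
    exact ⟨k, hk ▸ by exact_mod_cast (by omega : k < k + 2)⟩
  · rintro ⟨n, hn⟩
    exact hn.trans (ENat.natCast_lt_top _)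

end tieTime

section tieTimeLaw

variable {μ : Measure (ℕ → ℕ × ℕ)} {x : ℕ}

lemma setOf_le_nthTieTime_two_ae_eq (hμ : IsUrnProcess μ β r (x, x)) (n : ℕ) :
    {ω | ((n + 2 : ℕ) : ℕ∞) ≤ nthTieTime 2 ω} =ᵐ[μ] {ω | NoTieUpTo n fun t => ω (t + 1)} := by
  filter_upwards [ae_eq_start hμ] with ω hω
  exact propext (le_nthTieTime_two_iff (by rw [hω]) n)

lemma measure_le_nthTieTime_two (hr : 0 < r) (hx : 0 < x) (hμ : IsUrnProcess μ β r (x, x))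
    (n : ℕ) :
    μ {ω | ((n + 2 : ℕ) : ℕ∞) ≤ nthTieTime 2 ω} = ENNReal.ofReal (noReturnProb β r n x) :=
  (measure_congr (setOf_le_nthTieTime_two_ae_eq hμ n)).trans (measure_noTieUpTo_shift hr hx hμ n)

lemma measure_nthTieTime_two_lt_top_le (hr : 0 < r) (hβ : 0 ≤ β) (hx : 0 < x)
    (hμ : IsUrnProcess μ β r (x, x)) :
    μ {ω | nthTieTime 2 ω < ⊤} ≤ ENNReal.ofReal (2 / (r + 1)) := by
  have := hμ.1
  have hmono : Monotone fun n : ℕ => {ω | ((n + 2 : ℕ) : ℕ∞) ≤ nthTieTime 2 ω}ᶜ :=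
    fun n n' hnn' => Set.compl_subset_compl.2 fun ω (hω : ((n' + 2 : ℕ) : ℕ∞) ≤ _) =>
      (Nat.cast_le.2 (by omega : n + 2 ≤ n' + 2)).trans hω
  rw [setOf_nthTieTime_two_lt_top, hmono.measure_iUnion]
  refine iSup_le fun n => ?_
  rw [measure_congr (setOf_le_nthTieTime_two_ae_eq hμ n).compl,
    prob_compl_eq_one_sub (measurableSet_noTieUpTo_shift n), measure_noTieUpTo_shift hr hx hμ n,
    ← ENNReal.ofReal_one, ← ENNReal.ofReal_sub _ (noReturnProb_nonneg hr n x)]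
  exact ENNReal.ofReal_le_ofReal (one_sub_noReturnProb_le hr hβ hx n)

end tieTimeLaw

end Urn

/-- For `β ≥ β' ≥ 0`, `r ≥ 1` and a tied initial state `(x₀,x₀)`, the time of the
second tie (first return to a tie) satisfies `T₂(β,r,(x₀,x₀)) ⪰ T₂(β',r,(x₀,x₀))`.
In particular, the probability of ever tying again satisfies
`P[T₂(β,r,(x₀,x₀)) < ∞] ≤ 2/(r+1)`. -/
theorem stmt_3 (β β' r : ℝ) (hβ'0 : 0 ≤ β') (hββ' : β' ≤ β) (hr : 1 ≤ r)
    (x₀ : ℕ) (hx₀ : 0 < x₀)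
    (μ μ' : Measure (ℕ → ℕ × ℕ))
    (hμ : IsUrnProcess μ β r (x₀, x₀)) (hμ' : IsUrnProcess μ' β' r (x₀, x₀)) :
    (∀ t : ℕ, μ' {ω | (t : ℕ∞) ≤ nthTieTime 2 ω} ≤ μ {ω | (t : ℕ∞) ≤ nthTieTime 2 ω}) ∧
    (μ {ω | nthTieTime 2 ω < ⊤}).toReal ≤ 2 / (r + 1) := by
  have hr₀ : 0 < r := by linarith
  have := hμ.1
  have := hμ'.1
  refine ⟨fun t => ?_, ENNReal.toReal_le_of_le_ofReal (by positivity)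
    (Urn.measure_nthTieTime_two_lt_top_le hr₀ (hβ'0.trans hββ') hx₀ hμ)⟩
  obtain ht | ⟨n, rfl⟩ : t ≤ 1 ∨ ∃ n, t = n + 2 := by
    rcases t with _ | _ | n <;> simp
  · have huniv : {ω | (t : ℕ∞) ≤ nthTieTime 2 ω} = Set.univ :=
      Set.eq_univ_of_forall fun ω => le_trans (by exact_mod_cast ht) (Urn.one_le_nthTieTime_two ω)
    rw [huniv, measure_univ, measure_univ]
  · rw [Urn.measure_le_nthTieTime_two hr₀ hx₀ hμ, Urn.measure_le_nthTieTime_two hr₀ hx₀ hμ']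
    exact ENNReal.ofReal_le_ofReal (Urn.noReturnProb_mono hr₀ hβ'0 hββ' hx₀ n)
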